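/- arXiv:2010.14572 — 6 statements merged into one kernel-verified Lean document; each statement's English description precedes it below -/
import Mathlib

section
/- For every integer j ≥ 0, the number 2^(6+12j) cannot be written as x₁² + x₂² + x₃² + x₄² where each xᵢ is a sum of three positive cubes. -/
/-- `n` is a sum of three positive cubes. -/
def IsSumThreePosCubes (n : ℕ) : Prop :=
  ∃ a b c : ℕ, 0 < a ∧ 0 < b ∧ 0 < c ∧ n = a ^ 3 + b ^ 3 + c ^ 3

lemma cube_mod_nine (a : ℕ) : a ^ 3 % 9 = 0 ∨ a ^ 3 % 9 = 1 ∨ a ^ 3 % 9 = 8 := by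
  rw [Nat.pow_mod]
  have h : a % 9 < 9 := Nat.mod_lt _ (by norm_num)
  set r := a % 9 with hr
  interval_cases r <;> decide

lemma sum_three_cubes_mod_nine {n : ℕ} (h : IsSumThreePosCubes n) : n % 9 ≠ 4 := by
  obtain ⟨a, b, c, _, _, _, rfl⟩ := h
  have ha := cube_mod_nine a
  have hb := cube_mod_nine b
  have hc := cube_mod_nine c
  omega

lemma sq_mod_eight (x : ℕ) :
    (x % 2 = 0 ∧ (x ^ 2 % 8 = 0 ∨ x ^ 2 % 8 = 4)) ∨ (x % 2 = 1 ∧ x ^ 2 % 8 = 1) := by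
  rw [Nat.pow_mod, show x % 2 = x % 8 % 2 from (Nat.mod_mod_of_dvd x (by norm_num)).symm]
  have h : x % 8 < 8 := Nat.mod_lt _ (by norm_num)
  set r := x % 8 with hr
  interval_cases r <;> decide

lemma descent : ∀ k x₁ x₂ x₃ x₄ : ℕ, 0 < x₁ → 0 < x₂ → 0 < x₃ → 0 < x₄ →
    2 ^ (2 + 2 * k) = x₁ ^ 2 + x₂ ^ 2 + x₃ ^ 2 + x₄ ^ 2 →
    x₁ = 2 ^ k ∧ x₂ = 2 ^ k ∧ x₃ = 2 ^ k ∧ x₄ = 2 ^ k := by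
  intro k
  induction k with
  | zero =>
    intro x₁ x₂ x₃ x₄ h1 h2 h3 h4 heq
    norm_num at heq ⊢
    have b1 : x₁ ≤ 2 := by nlinarith
    have b2 : x₂ ≤ 2 := by nlinarith
    have b3 : x₃ ≤ 2 := by nlinarith
    have b4 : x₄ ≤ 2 := by nlinarith
    interval_cases x₁ <;> interval_cases x₂ <;> interval_cases x₃ <;>
      interval_cases x₄ <;> omega
  | succ k ih =>
    intro x₁ x₂ x₃ x₄ h1 h2 h3 h4 heq
    have h8 : (2:ℕ) ^ (2 + 2 * (k + 1)) = 8 * 2 ^ (1 + 2 * k) := by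
      rw [show 2 + 2 * (k + 1) = 3 + (1 + 2 * k) by ring, pow_add]
      norm_num
    have e1 := sq_mod_eight x₁
    have e2 := sq_mod_eight x₂
    have e3 := sq_mod_eight x₃
    have e4 := sq_mod_eight x₄
    have ev1 : x₁ % 2 = 0 := by omega
    have ev2 : x₂ % 2 = 0 := by omega
    have ev3 : x₃ % 2 = 0 := by omega
    have ev4 : x₄ % 2 = 0 := by omega
    obtain ⟨y₁, rfl⟩ : ∃ y, x₁ = 2 * y := ⟨x₁ / 2, by omega⟩
    obtain ⟨y₂, rfl⟩ : ∃ y, x₂ = 2 * y := ⟨x₂ / 2, by omega⟩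
    obtain ⟨y₃, rfl⟩ : ∃ y, x₃ = 2 * y := ⟨x₃ / 2, by omega⟩
    obtain ⟨y₄, rfl⟩ : ∃ y, x₄ = 2 * y := ⟨x₄ / 2, by omega⟩
    have heq' : 2 ^ (2 + 2 * k) = y₁ ^ 2 + y₂ ^ 2 + y₃ ^ 2 + y₄ ^ 2 := by
      have : (4:ℕ) * 2 ^ (2 + 2 * k) = 4 * (y₁ ^ 2 + y₂ ^ 2 + y₃ ^ 2 + y₄ ^ 2) := by
        rw [show (4:ℕ) * 2 ^ (2 + 2 * k) = 2 ^ (2 + 2 * (k + 1)) by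
          rw [show 2 + 2 * (k + 1) = 2 + (2 + 2 * k) by ring,
            pow_add 2 2 (2 + 2 * k)]; norm_num]
        rw [heq]; ring
      omega
    obtain ⟨r1, r2, r3, r4⟩ := ih y₁ y₂ y₃ y₄ (by omega) (by omega) (by omega) (by omega) heq'
    refine ⟨?_, ?_, ?_, ?_⟩ <;> rw [pow_succ] <;> omega

lemma pow_two_mod_nine (j : ℕ) : 2 ^ (2 + 6 * j) % 9 = 4 := by
  have h64 : (64:ℕ) ^ j % 9 = 1 := by rw [Nat.pow_mod]; norm_num
  have : (2:ℕ) ^ (2 + 6 * j) = 4 * 64 ^ j := by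
    rw [pow_add, pow_mul]; norm_num
  rw [this, Nat.mul_mod, h64]

theorem power_of_two_not_sum_four_squares_of_C (j : ℕ) :
    ¬ ∃ x₁ x₂ x₃ x₄ : ℕ, IsSumThreePosCubes x₁ ∧ IsSumThreePosCubes x₂ ∧
      IsSumThreePosCubes x₃ ∧ IsSumThreePosCubes x₄ ∧
      2 ^ (6 + 12 * j) = x₁ ^ 2 + x₂ ^ 2 + x₃ ^ 2 + x₄ ^ 2 := by
  rintro ⟨x₁, x₂, x₃, x₄, c1, c2, c3, c4, heq⟩
  have pos : ∀ n : ℕ, IsSumThreePosCubes n → 0 < n := by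
    rintro n ⟨a, b, c, ha, hb, hc, rfl⟩
    have : 0 < a ^ 3 := pow_pos ha 3
    omega
  have heq' : 2 ^ (2 + 2 * (2 + 6 * j)) = x₁ ^ 2 + x₂ ^ 2 + x₃ ^ 2 + x₄ ^ 2 := by
    rw [show 2 + 2 * (2 + 6 * j) = 6 + 12 * j by ring]; exact heq
  obtain ⟨r1, -, -, -⟩ := descent (2 + 6 * j) x₁ x₂ x₃ x₄
    (pos _ c1) (pos _ c2) (pos _ c3) (pos _ c4) heq'
  exact sum_three_cubes_mod_nine c1 (r1 ▸ pow_two_mod_nine j)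
end

section
/- Let E(N) be the number of positive integers n ≤ N that cannot be written as x₁² + x₂² + x₃² + x₄² with each xᵢ a sum of three positive cubes. Then E(N) ≫ log N, i.e., there exists c > 0 such that E(N) ≥ c·log N for all sufficiently large N. -/
lemma key8 : ∀ x y z w : Fin 8, (x.val^2 + y.val^2 + z.val^2 + w.val^2) % 8 = 0 →
    x.val % 2 = 0 ∧ y.val % 2 = 0 ∧ z.val % 2 = 0 ∧ w.val % 2 = 0 := by decide

lemma all_even {a b c d : ℕ} (h : (a^2+b^2+c^2+d^2) % 8 = 0) :
    a % 2 = 0 ∧ b % 2 = 0 ∧ c % 2 = 0 ∧ d % 2 = 0 := by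
  have ha : a^2 % 8 = (a%8)^2 % 8 := by rw [Nat.pow_mod]
  have hb : b^2 % 8 = (b%8)^2 % 8 := by rw [Nat.pow_mod]
  have hc : c^2 % 8 = (c%8)^2 % 8 := by rw [Nat.pow_mod]
  have hd : d^2 % 8 = (d%8)^2 % 8 := by rw [Nat.pow_mod]
  have h8 : ((a%8)^2 + (b%8)^2 + (c%8)^2 + (d%8)^2) % 8 = 0 := by omega
  have := key8 ⟨a%8, Nat.mod_lt a (by norm_num)⟩ ⟨b%8, Nat.mod_lt b (by norm_num)⟩
    ⟨c%8, Nat.mod_lt c (by norm_num)⟩ ⟨d%8, Nat.mod_lt d (by norm_num)⟩ h8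
  simp only [] at this
  omega

lemma rep2pow : ∀ k a b c d : ℕ, a^2+b^2+c^2+d^2 = 2 * 4^k →
    a = 0 ∨ b = 0 ∨ c = 0 ∨ d = 0 := by
  intro k
  induction k with
  | zero =>
    intro a b c d h
    norm_num at h
    have ha : a ≤ 1 := by nlinarith
    have hb : b ≤ 1 := by nlinarith
    have hc : c ≤ 1 := by nlinarith
    have hd : d ≤ 1 := by nlinarith
    interval_cases a <;> interval_cases b <;> interval_cases c <;> interval_cases d <;>
      simp_all
  | succ k ih =>
    intro a b c d h
    have h8 : (a^2+b^2+c^2+d^2) % 8 = 0 := by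
      have : 2 * 4^(k+1) = 8 * 4^k := by ring
      omega
    obtain ⟨ea, eb, ec, ed⟩ := all_even h8
    obtain ⟨a', rfl⟩ : ∃ a', a = 2*a' := ⟨a/2, by omega⟩
    obtain ⟨b', rfl⟩ : ∃ b', b = 2*b' := ⟨b/2, by omega⟩
    obtain ⟨c', rfl⟩ : ∃ c', c = 2*c' := ⟨c/2, by omega⟩
    obtain ⟨d', rfl⟩ : ∃ d', d = 2*d' := ⟨d/2, by omega⟩
    have h' : a'^2+b'^2+c'^2+d'^2 = 2*4^k := by
      have e1 : (2*a')^2+(2*b')^2+(2*c')^2+(2*d')^2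
          = 4*(a'^2+b'^2+c'^2+d'^2) := by ring
      have e2 : 2 * 4^(k+1) = 4*(2*4^k) := by ring
      omega
    rcases ih a' b' c' d' h' with h|h|h|h <;> omega

lemma pos_of_cubes {x : ℕ} (h : IsSumThreePosCubes x) : 0 < x := by
  obtain ⟨a, b, c, ha, hb, hc, rfl⟩ := h
  have := pow_pos ha 3
  omega

theorem exceptional_set_lower_bound :
    ∃ c : ℝ, 0 < c ∧ ∃ N₀ : ℕ, ∀ N : ℕ, N₀ ≤ N →
      c * Real.log N ≤
        Set.ncard {n : ℕ | 1 ≤ n ∧ n ≤ N ∧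
          ¬ ∃ x₁ x₂ x₃ x₄ : ℕ, IsSumThreePosCubes x₁ ∧ IsSumThreePosCubes x₂ ∧
            IsSumThreePosCubes x₃ ∧ IsSumThreePosCubes x₄ ∧
            n = x₁ ^ 2 + x₂ ^ 2 + x₃ ^ 2 + x₄ ^ 2} := by
  refine ⟨1/4, by norm_num, 4, fun N hN => ?_⟩
  set S := {n : ℕ | 1 ≤ n ∧ n ≤ N ∧
      ¬ ∃ x₁ x₂ x₃ x₄ : ℕ, IsSumThreePosCubes x₁ ∧ IsSumThreePosCubes x₂ ∧
        IsSumThreePosCubes x₃ ∧ IsSumThreePosCubes x₄ ∧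
        n = x₁ ^ 2 + x₂ ^ 2 + x₃ ^ 2 + x₄ ^ 2} with hS
  set L := Nat.log 4 N with hLdef
  have hNpos : 0 < N := by omega
  -- each 2*4^j with j < L is in S
  have hmem : ∀ j < L, (2 * 4^j) ∈ S := by
    intro j hj
    refine ⟨by have := pow_pos (by norm_num : (0:ℕ) < 4) j; omega, ?_, ?_⟩
    · calc 2 * 4^j ≤ 4^(j+1) := by rw [pow_succ]; nlinarith [pow_pos (by norm_num : (0:ℕ) < 4) j]
        _ ≤ 4^L := Nat.pow_le_pow_right (by norm_num) (by omega)
        _ ≤ N := Nat.pow_log_le_self 4 (by omega)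
    · rintro ⟨x₁, x₂, x₃, x₄, h1, h2, h3, h4, heq⟩
      rcases rep2pow j x₁ x₂ x₃ x₄ heq.symm with h|h|h|h
      · exact absurd h (by have := pos_of_cubes h1; omega)
      · exact absurd h (by have := pos_of_cubes h2; omega)
      · exact absurd h (by have := pos_of_cubes h3; omega)
      · exact absurd h (by have := pos_of_cubes h4; omega)
  have hSfin : S.Finite := (Set.finite_Icc 1 N).subset (fun n hn => ⟨hn.1, hn.2.1⟩)
  have hinj : Function.Injective (fun j : ℕ => 2 * 4^j) := by
    intro i j hij
    simp only [] at hij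
    exact Nat.pow_right_injective (by norm_num : 2 ≤ 4) (show 4^i = 4^j by omega)
  have hsub : ↑((Finset.range L).image (fun j => 2 * 4^j)) ⊆ S := by
    intro n hn
    simp only [Finset.coe_image, Finset.coe_range, Set.mem_image, Set.mem_Iio] at hn
    obtain ⟨j, hj, rfl⟩ := hn
    exact hmem j hj
  have hLcard : L ≤ S.ncard := by
    have := Set.ncard_le_ncard hsub hSfin
    rwa [Set.ncard_coe_finset, Finset.card_image_of_injective _ hinj,
      Finset.card_range] at this
  have hL1 : 1 ≤ L := by
    have : 4^1 ≤ N := by omega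
    exact (Nat.le_log_iff_pow_le (by norm_num) (by omega)).mpr this
  -- real estimate
  have hNlt : (N : ℝ) < 4^(L+1) := by
    exact_mod_cast Nat.lt_pow_succ_log_self (by norm_num : 1 < 4) N
  have hlog4 : Real.log 4 < 1.4 := by
    rw [show (4:ℝ) = 2^2 by norm_num, Real.log_pow]
    have := Real.log_two_lt_d9
    push_cast
    linarith
  have hlogN : Real.log N ≤ (L+1) * Real.log 4 := by
    calc Real.log N ≤ Real.log (4^(L+1)) :=
          Real.log_le_log (by exact_mod_cast hNpos) hNlt.le
      _ = (L+1) * Real.log 4 := by rw [Real.log_pow]; push_cast; ring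
  have hlog4pos : 0 ≤ Real.log 4 := Real.log_nonneg (by norm_num)
  have hL1' : (1:ℝ) ≤ L := by exact_mod_cast hL1
  have hLcard' : (L:ℝ) ≤ S.ncard := by exact_mod_cast hLcard
  nlinarith [Real.log_nonneg (show (1:ℝ) ≤ N by exact_mod_cast hNpos)]
end

section
/- For every h ≥ 3 and every residue class m modulo 3^h with m not congruent to 4 or 5 modulo 9, there exist x₁, x₂, x₃ with gcd(x₁, 3) = 1 such that x₁³ + x₂³ + x₃³ ≡ m (mod 3^h). -/
private lemma cop : ∀ x : ℤ, x.gcd 3 = 1 → IsCoprime x 3 := fun _ hx =>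
  Int.isCoprime_iff_gcd_eq_one.mpr hx

private lemma base27 (m : ℤ) (h4 : m % 9 ≠ 4) (h5 : m % 9 ≠ 5) :
    ∃ x₁ x₂ x₃ : ℤ, IsCoprime x₁ 3 ∧
      x₁ ^ 3 + x₂ ^ 3 + x₃ ^ 3 ≡ m [ZMOD 27] := by
  have h9 : m % 9 = (m % 27) % 9 := by
    conv_lhs => rw [← Int.emod_emod_of_dvd m (by norm_num : (9:ℤ) ∣ 27)]
  obtain ⟨r, hr, hr0, hr27⟩ : ∃ r : ℤ, m % 27 = r ∧ 0 ≤ r ∧ r < 27 :=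
    ⟨m % 27, rfl, Int.emod_nonneg m (by norm_num), Int.emod_lt_of_pos m (by norm_num)⟩
  rw [hr] at h9
  rw [h9] at h4 h5
  interval_cases r
  · exact ⟨1, 0, 8, cop 1 (by decide), by show _ % 27 = m % 27; rw [hr]; decide⟩
  · exact ⟨1, 0, 0, cop 1 (by decide), by show _ % 27 = m % 27; rw [hr]; decide⟩
  · exact ⟨1, 0, 1, cop 1 (by decide), by show _ % 27 = m % 27; rw [hr]; decide⟩
  · exact ⟨1, 1, 1, cop 1 (by decide), by show _ % 27 = m % 27; rw [hr]; decide⟩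
  · omega
  · omega
  · exact ⟨2, 2, 5, cop 2 (by decide), by show _ % 27 = m % 27; rw [hr]; decide⟩
  · exact ⟨2, 0, 8, cop 2 (by decide), by show _ % 27 = m % 27; rw [hr]; decide⟩
  · exact ⟨1, 2, 8, cop 1 (by decide), by show _ % 27 = m % 27; rw [hr]; decide⟩
  · exact ⟨1, 0, 2, cop 1 (by decide), by show _ % 27 = m % 27; rw [hr]; decide⟩
  · exact ⟨1, 1, 2, cop 1 (by decide), by show _ % 27 = m % 27; rw [hr]; decide⟩
  · exact ⟨1, 0, 4, cop 1 (by decide), by show _ % 27 = m % 27; rw [hr]; decide⟩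
  · exact ⟨1, 1, 4, cop 1 (by decide), by show _ % 27 = m % 27; rw [hr]; decide⟩
  · omega
  · omega
  · exact ⟨2, 2, 8, cop 2 (by decide), by show _ % 27 = m % 27; rw [hr]; decide⟩
  · exact ⟨2, 0, 2, cop 2 (by decide), by show _ % 27 = m % 27; rw [hr]; decide⟩
  · exact ⟨1, 2, 2, cop 1 (by decide), by show _ % 27 = m % 27; rw [hr]; decide⟩
  · exact ⟨1, 0, 5, cop 1 (by decide), by show _ % 27 = m % 27; rw [hr]; decide⟩
  · exact ⟨1, 1, 5, cop 1 (by decide), by show _ % 27 = m % 27; rw [hr]; decide⟩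
  · exact ⟨1, 0, 7, cop 1 (by decide), by show _ % 27 = m % 27; rw [hr]; decide⟩
  · exact ⟨1, 1, 7, cop 1 (by decide), by show _ % 27 = m % 27; rw [hr]; decide⟩
  · omega
  · omega
  · exact ⟨2, 2, 2, cop 2 (by decide), by show _ % 27 = m % 27; rw [hr]; decide⟩
  · exact ⟨2, 0, 5, cop 2 (by decide), by show _ % 27 = m % 27; rw [hr]; decide⟩
  · exact ⟨1, 2, 5, cop 1 (by decide), by show _ % 27 = m % 27; rw [hr]; decide⟩
private lemma lift_step (k : ℕ) (m x₁ x₂ x₃ : ℤ) (hc : IsCoprime x₁ 3)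
    (hmod : x₁ ^ 3 + x₂ ^ 3 + x₃ ^ 3 ≡ m [ZMOD (3 : ℤ) ^ (k + 2)]) :
    ∃ y₁ y₂ y₃ : ℤ, IsCoprime y₁ 3 ∧
      y₁ ^ 3 + y₂ ^ 3 + y₃ ^ 3 ≡ m [ZMOD (3 : ℤ) ^ (k + 3)] := by
  obtain ⟨c, hcq⟩ := Int.ModEq.dvd hmod
  have hnd : ¬ (3 : ℤ) ∣ x₁ := by
    intro hdvd
    have := hc.isUnit_of_dvd' hdvd dvd_rfl
    rw [Int.isUnit_iff] at this
    omega
  have hu : ∃ u : ℤ, x₁ ^ 2 = 3 * u + 1 := by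
    obtain ⟨q, r, hr01, hx⟩ : ∃ q r : ℤ, (r = 1 ∨ r = 2) ∧ x₁ = 3 * q + r := by
      refine ⟨x₁ / 3, x₁ % 3, ?_, by omega⟩
      have := Int.emod_nonneg x₁ (by norm_num : (3:ℤ) ≠ 0)
      have := Int.emod_lt_of_pos x₁ (by norm_num : (0:ℤ) < 3)
      have h3 : x₁ % 3 ≠ 0 := fun hz => hnd (Int.dvd_of_emod_eq_zero hz)
      omega
    rcases hr01 with rfl | rfl
    · exact ⟨3 * q ^ 2 + 2 * q, by rw [hx]; ring⟩
    · exact ⟨3 * q ^ 2 + 4 * q + 1, by rw [hx]; ring⟩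
  obtain ⟨u, hu⟩ := hu
  refine ⟨x₁ + c * 3 ^ (k + 1), x₂, x₃, ?_, ?_⟩
  · obtain ⟨a, b, hab⟩ := hc
    exact ⟨a, b - a * (c * 3 ^ k), by linear_combination hab⟩
  · have key : m - ((x₁ + c * 3 ^ (k + 1)) ^ 3 + x₂ ^ 3 + x₃ ^ 3) =
        (3 : ℤ) ^ (k + 3) * (-(c * u + x₁ * c ^ 2 * 3 ^ k + c ^ 3 * 3 ^ (2 * k))) := by
      linear_combination hcq - ((3:ℤ) ^ (k + 2) * c) * hu
    exact (Int.modEq_iff_dvd.mpr ⟨_, key⟩)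

theorem three_cubes_mod_three_pow (h : ℕ) (hh : 3 ≤ h) (m : ℤ)
    (h4 : m % 9 ≠ 4) (h5 : m % 9 ≠ 5) :
    ∃ x₁ x₂ x₃ : ℤ, IsCoprime x₁ 3 ∧
      x₁ ^ 3 + x₂ ^ 3 + x₃ ^ 3 ≡ m [ZMOD (3 : ℤ) ^ h] := by
  induction h, hh using Nat.le_induction with
  | base =>
    have := base27 m h4 h5
    norm_num at this ⊢
    exact this
  | succ n hn ih =>
    obtain ⟨x₁, x₂, x₃, hc, hmod⟩ := ih
    obtain ⟨k, rfl⟩ : ∃ k, n = k + 2 := ⟨n - 2, by omega⟩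
    exact lift_step k m x₁ x₂ x₃ hc hmod
end

section
/- Let h ≥ 3 and let n be any residue modulo 2^h. If y₁² + y₂² + y₃² + y₄² ≡ n (mod 8) has a solution with y₁ odd, then the number of solutions (y₁, y₂, y₃, y₄) modulo 2^h to y₁² + y₂² + y₃² + y₄² ≡ n (mod 2^h) with y₁ odd is at least 2^(3(h−3)). -/
lemma odd_sq_mod_eight {a : ℤ} (ha : Odd a) : (8:ℤ) ∣ a^2 - 1 := by
  obtain ⟨c, rfl⟩ := ha
  obtain ⟨d, hd⟩ := Int.even_mul_succ_self c
  exact ⟨d, by nlinarith⟩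

lemma sq_lift (m : ℤ) (hm : (8:ℤ) ∣ m - 1) (j : ℕ) :
    ∃ y : ℤ, Odd y ∧ (2:ℤ)^(j+3) ∣ y^2 - m := by
  induction j with
  | zero =>
    refine ⟨1, odd_one, ?_⟩
    have h8 : ((2:ℤ)^(0+3)) = 8 := by norm_num
    rw [h8]
    have := dvd_neg.mpr hm
    simpa using this
  | succ j ih =>
    obtain ⟨y, hy, k, hk⟩ := ih
    obtain ⟨c, hc⟩ := hy
    refine ⟨y + 2^(j+2) * k, ⟨c + 2^(j+1)*k, by rw [hc]; ring⟩,
      ⟨k*(c+1) + 2^j * k^2, ?_⟩⟩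
    have hm' : m = y^2 - 2^(j+3) * k := by linarith
    subst hm' hc
    ring

lemma odd_not_two_dvd (j : ℕ) {y : ℤ} (hy : Odd y) :
    ¬ (2 : ZMod (2^(j+3))) ∣ (y : ZMod (2^(j+3))) := by
  intro ⟨c, hc⟩
  have hdvd : (2:ℕ) ∣ 2^(j+3) := dvd_pow_self 2 (by omega)
  have := congrArg (ZMod.castHom hdvd (ZMod 2)) hc
  rw [map_mul, map_intCast, map_ofNat] at this
  have h2 : (2 : ZMod 2) = 0 := by decide
  rw [h2, zero_mul] at this
  rw [ZMod.intCast_zmod_eq_zero_iff_dvd] at this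
  exact (Int.not_even_iff_odd.mpr hy) (even_iff_two_dvd.mpr (by exact_mod_cast this))

theorem four_squares_lift_mod_two_pow (h : ℕ) (hh : 3 ≤ h) (n : ℤ)
    (hsol : ∃ y₁ y₂ y₃ y₄ : ℤ, Odd y₁ ∧
      y₁ ^ 2 + y₂ ^ 2 + y₃ ^ 2 + y₄ ^ 2 ≡ n [ZMOD 8]) :
    2 ^ (3 * (h - 3)) ≤
      Set.ncard {y : ZMod (2 ^ h) × ZMod (2 ^ h) × ZMod (2 ^ h) × ZMod (2 ^ h) |
        ¬ (2 : ZMod (2 ^ h)) ∣ y.1 ∧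
        y.1 ^ 2 + y.2.1 ^ 2 + y.2.2.1 ^ 2 + y.2.2.2 ^ 2 = (n : ZMod (2 ^ h))} := by
  obtain ⟨a₁, a₂, a₃, a₄, ha₁, hsum⟩ := hsol
  obtain ⟨j, rfl⟩ : ∃ j, h = j + 3 := ⟨h - 3, by omega⟩
  set N : ℕ := 2^(j+3) with hN
  set M : ℕ := 2^j with hM
  haveI : NeZero M := ⟨by positivity⟩
  -- lifted coordinates
  let b : ℤ → ZMod M → ℤ := fun a t => a + 8 * t.val
  have hsum8 : (8:ℤ) ∣ n - (a₁^2+a₂^2+a₃^2+a₄^2) := Int.ModEq.dvd hsum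
  have hb8 : ∀ (a : ℤ) (t : ZMod M), (8:ℤ) ∣ (b a t)^2 - a^2 :=
    fun a t => ⟨2*a*t.val + 8*(t.val:ℤ)^2, by simp only [b]; ring⟩
  have key : ∀ t : ZMod M × ZMod M × ZMod M,
      (8:ℤ) ∣ (n - (b a₂ t.1)^2 - (b a₃ t.2.1)^2 - (b a₄ t.2.2)^2) - 1 := by
    intro t
    obtain ⟨e0, he0⟩ := hsum8
    obtain ⟨e1, he1⟩ := odd_sq_mod_eight ha₁
    obtain ⟨e2, he2⟩ := hb8 a₂ t.1
    obtain ⟨e3, he3⟩ := hb8 a₃ t.2.1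
    obtain ⟨e4, he4⟩ := hb8 a₄ t.2.2
    exact ⟨e0 + e1 - e2 - e3 - e4, by linarith⟩
  choose y hyo hyd using fun t => sq_lift _ (key t) j
  let f : ZMod M × ZMod M × ZMod M → ZMod N × ZMod N × ZMod N × ZMod N :=
    fun t => ((y t : ZMod N), ((b a₂ t.1 : ℤ) : ZMod N),
      ((b a₃ t.2.1 : ℤ) : ZMod N), ((b a₄ t.2.2 : ℤ) : ZMod N))
  have hNM : (N:ℤ) = 8 * (M:ℤ) := by
    push_cast [hN, hM]
    ring
  -- the cast of b determines t
  have hbinj : ∀ (a : ℤ) (t t' : ZMod M),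
      ((b a t : ℤ) : ZMod N) = ((b a t' : ℤ) : ZMod N) → t = t' := by
    intro a t t' he
    rw [ZMod.intCast_eq_intCast_iff, Int.ModEq] at he
    have hdvd : (N:ℤ) ∣ (b a t) - (b a t') := Int.ModEq.dvd (Int.ModEq.symm he)
    have h8 : (b a t) - (b a t') = 8 * ((t.val:ℤ) - (t'.val:ℤ)) := by
      simp only [b]; ring
    rw [h8, hNM] at hdvd
    have hdvd2 : (M:ℤ) ∣ (t.val:ℤ) - (t'.val:ℤ) :=
      (mul_dvd_mul_iff_left (by norm_num : (8:ℤ) ≠ 0)).mp hdvd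
    have hz : ((t.val:ℤ) - (t'.val:ℤ)) = 0 := by
      refine Int.eq_zero_of_abs_lt_dvd hdvd2 ?_
      have h1 : t.val < M := ZMod.val_lt t
      have h2 : t'.val < M := ZMod.val_lt t'
      rw [abs_sub_lt_iff]
      constructor <;> [skip; skip] <;>
        · push_cast
          omega
    have : t.val = t'.val := by omega
    exact ZMod.val_injective M this
  have hfinj : Function.Injective f := by
    intro t t' he
    simp only [f, Prod.mk.injEq] at he
    obtain ⟨-, h2, h3, h4⟩ := he
    exact Prod.ext (hbinj a₂ t.1 t'.1 h2)
      (Prod.ext (hbinj a₃ t.2.1 t'.2.1 h3) (hbinj a₄ t.2.2 t'.2.2 h4))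
  set S : Set (ZMod N × ZMod N × ZMod N × ZMod N) :=
    {y : ZMod N × ZMod N × ZMod N × ZMod N |
        ¬ (2 : ZMod N) ∣ y.1 ∧
        y.1 ^ 2 + y.2.1 ^ 2 + y.2.2.1 ^ 2 + y.2.2.2 ^ 2 = (n : ZMod N)} with hS
  have hrange : Set.range f ⊆ S := by
    rintro - ⟨t, rfl⟩
    constructor
    · exact odd_not_two_dvd j (hyo t)
    · have hd := hyd t
      have hmod : ((y t)^2 + (b a₂ t.1)^2 + (b a₃ t.2.1)^2 + (b a₄ t.2.2)^2 : ℤ)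
          ≡ n [ZMOD (N:ℤ)] := by
        rw [Int.modEq_iff_dvd]
        have hNeq : ((N:ℕ):ℤ) = 2^(j+3) := by push_cast [hN]; ring
        rw [hNeq]
        obtain ⟨k, hk⟩ := hd
        exact ⟨-k, by linarith⟩
      have hcast := (ZMod.intCast_eq_intCast_iff _ _ _).mpr hmod
      simp only [f]
      push_cast at hcast ⊢
      convert hcast using 2 <;> ring
  have hcard : (Set.range f).ncard = 2^(3*j) := by
    rw [← Set.image_univ, Set.ncard_image_of_injective _ hfinj, Set.ncard_univ]
    simp [Nat.card_prod, Nat.card_zmod, hM]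
    ring
  calc (2:ℕ) ^ (3 * ((j+3) - 3)) = 2^(3*j) := by norm_num
    _ = (Set.range f).ncard := hcard.symm
    _ ≤ S.ncard := Set.ncard_le_ncard hrange (Set.toFinite S)
end

section
/- Let γ ≥ 3, let n be an integer with 2^γ exactly dividing n, let θ = ⌊(γ−1)/2⌋, and let h ≥ γ + 2. Then the congruence x₁² + x₂² + x₃² + x₄² ≡ n (mod 2^h) has at least 2^(3(h−2θ−3)) · 2^(4θ) solutions modulo 2^h. -/
-- square roots of 1 mod 8 lift to any power 2^k, k ≥ 3
lemma sq_lift_aux (k : ℕ) (hk : 3 ≤ k) : ∀ a : ℤ, a % 8 = 1 → ∃ r : ℤ, (2:ℤ)^k ∣ r^2 - a := by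
  induction k, hk using Nat.le_induction with
  | base =>
    intro a ha
    exact ⟨1, by norm_num; omega⟩
  | succ j hj ih =>
    intro a ha
    obtain ⟨r, c, he⟩ := ih a ha
    obtain ⟨e, rfl⟩ : ∃ e, j = e + 3 := ⟨j - 3, by omega⟩
    set X : ℤ := (2:ℤ)^e with hX
    have hXj : (2:ℤ)^(e+3) = 8*X := by rw [pow_add]; ring
    have hXj1 : (2:ℤ)^(e+3+1) = 16*X := by rw [pow_add, pow_add]; ring
    rw [hXj] at he
    rcases Int.even_or_odd r with ⟨t, ht⟩ | ⟨t, ht⟩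
    · exfalso
      have h2 : (2:ℤ) ∣ a := ⟨2*t^2 - 4*X*c, by linear_combination -he + (r + 2*t)*ht⟩
      omega
    · refine ⟨r + c*(4*X), c*(t+1) + c^2*X, ?_⟩
      rw [hXj1]
      linear_combination he + 8*X*c*ht

lemma digit_eq (M b b' : ℤ) (hb : 0 ≤ b) (h1 : b < M) (hb' : 0 ≤ b') (h1' : b' < M)
    (hd : M ∣ b - b') : b = b' := by
  have h0 : b - b' = 0 := Int.eq_zero_of_dvd_of_natAbs_lt_natAbs hd (by omega)
  omega

theorem four_squares_count_mod_two_pow (γ : ℕ) (hγ : 3 ≤ γ) (n : ℤ)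
    (hdvd : (2 : ℤ) ^ γ ∣ n) (hndvd : ¬ (2 : ℤ) ^ (γ + 1) ∣ n)
    (h : ℕ) (hh : γ + 2 ≤ h) :
    2 ^ (3 * (h - 2 * ((γ - 1) / 2) - 3)) * 2 ^ (4 * ((γ - 1) / 2)) ≤
      Set.ncard {x : ZMod (2 ^ h) × ZMod (2 ^ h) × ZMod (2 ^ h) × ZMod (2 ^ h) |
        x.1 ^ 2 + x.2.1 ^ 2 + x.2.2.1 ^ 2 + x.2.2.2 ^ 2 = (n : ZMod (2 ^ h))} := by
  set θ : ℕ := (γ - 1) / 2 with hθdef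
  -- basic arithmetic on θ
  have hθ1 : 2*θ + 1 ≤ γ := by omega
  have hθ2 : γ ≤ 2*θ + 2 := by omega
  set e : ℕ := h - 2*θ - 3 with hedef
  have hhe : h = θ + θ + e + 3 := by omega
  -- n = 2^(2θ) * m
  obtain ⟨m, hm⟩ : (2:ℤ)^θ * 2^θ ∣ n := by
    rw [← pow_add]
    exact dvd_trans (pow_dvd_pow 2 (by omega)) hdvd
  -- m is even
  have hm2 : (2:ℤ) ∣ m := by
    obtain ⟨m', hm'⟩ : (2:ℤ)^θ * 2^θ * 2 ∣ n := by
      rw [← pow_add, ← pow_succ]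
      exact dvd_trans (pow_dvd_pow 2 (by omega)) hdvd
    refine ⟨m', ?_⟩
    have hne : (2:ℤ)^θ * 2^θ ≠ 0 := by positivity
    have heq : (2:ℤ)^θ * 2^θ * m = 2^θ * 2^θ * (2*m') := by linear_combination hm' - hm
    exact mul_left_cancel₀ hne heq
  -- m not divisible by 8
  have hm8 : ¬ (8:ℤ) ∣ m := by
    rintro ⟨m', hm'⟩
    apply hndvd
    refine dvd_trans (pow_dvd_pow 2 (show γ + 1 ≤ 2*θ + 3 by omega)) ⟨m', ?_⟩
    rw [show 2*θ+3 = θ+θ+3 by omega, pow_add, pow_add, hm, hm']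
    ring
  -- choose base point mod 8
  obtain ⟨β₂, β₃, β₄, hβ⟩ : ∃ b2 b3 b4 : ℤ, (m - b2^2 - b3^2 - b4^2) % 8 = 1 := by
    have : m % 8 = 2 ∨ m % 8 = 4 ∨ m % 8 = 6 := by omega
    rcases this with hc | hc | hc
    · exact ⟨1, 0, 0, by norm_num; omega⟩
    · exact ⟨1, 1, 1, by norm_num; omega⟩
    · exact ⟨2, 1, 0, by norm_num; omega⟩
  have hk3 : 3 ≤ e + 3 := by omega
  -- square root function
  have key : ∀ b c d : ℤ, ∃ r : ℤ,
      (2:ℤ)^(e+3) ∣ r^2 - (m - (β₂+8*b)^2 - (β₃+8*c)^2 - (β₄+8*d)^2) := by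
    intro b c d
    apply sq_lift_aux (e+3) hk3
    have h8 : (8:ℤ) ∣ ((m - β₂^2 - β₃^2 - β₄^2) - (m - (β₂+8*b)^2 - (β₃+8*c)^2 - (β₄+8*d)^2)) :=
      ⟨2*β₂*b + 8*b^2 + 2*β₃*c + 8*c^2 + 2*β₄*d + 8*d^2, by ring⟩
    omega
  set R : ℤ → ℤ → ℤ → ℤ := fun b c d => (key b c d).choose with hRdef
  have hR : ∀ b c d : ℤ,
      (2:ℤ)^(e+3) ∣ (R b c d)^2 - (m - (β₂+8*b)^2 - (β₃+8*c)^2 - (β₄+8*d)^2) :=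
    fun b c d => (key b c d).choose_spec
  -- atoms
  set A : ℤ := (2:ℤ)^θ with hAdef
  set X : ℤ := (2:ℤ)^e with hXdef
  have hA0 : 0 < A := by positivity
  have hX0 : 0 < X := by positivity
  have hk : (2:ℤ)^(e+3) = 8*X := by rw [pow_add]; ring
  haveI : NeZero (2^h) := ⟨by positivity⟩
  -- domain
  set D := Fin (2^e) × Fin (2^e) × Fin (2^e) × Fin (2^θ) × Fin (2^θ) × Fin (2^θ) × Fin (2^θ)
    with hDdef
  set N : ℕ := 2^h with hNdef
  have hH : (N : ℤ) = 8*(A*A*X) := by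
    rw [hNdef]
    push_cast
    rw [hhe, pow_add, pow_add, pow_add]
    ring
  -- the map
  set f : D → ZMod N × ZMod N × ZMod N × ZMod N := fun p =>
    ( ((A * R (p.1 : ℕ) (p.2.1 : ℕ) (p.2.2.1 : ℕ) + 8*A*X*((p.2.2.2.1 : ℕ) : ℤ) : ℤ) : ZMod N),
      ((A * (β₂ + 8*((p.1 : ℕ) : ℤ)) + 8*A*X*((p.2.2.2.2.1 : ℕ) : ℤ) : ℤ) : ZMod N),
      ((A * (β₃ + 8*((p.2.1 : ℕ) : ℤ)) + 8*A*X*((p.2.2.2.2.2.1 : ℕ) : ℤ) : ℤ) : ZMod N),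
      ((A * (β₄ + 8*((p.2.2.1 : ℕ) : ℤ)) + 8*A*X*((p.2.2.2.2.2.2 : ℕ) : ℤ) : ℤ) : ZMod N) )
    with hfdef
  -- helper : casting characterization
  have hcast : ∀ a b : ℤ, ((a : ZMod N) = (b : ZMod N)) ↔ (8*(A*A*X)) ∣ (a - b) := by
    intro a b
    rw [ZMod.intCast_eq_intCast_iff, Int.modEq_iff_dvd, hH]
    exact dvd_sub_comm
  have hsum : ∀ a₁ a₂ a₃ a₄ : ℤ, ((a₁ : ZMod N))^2 + (a₂:ZMod N)^2 + (a₃:ZMod N)^2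
      + (a₄:ZMod N)^2 = ((a₁^2+a₂^2+a₃^2+a₄^2 : ℤ) : ZMod N) := by
    intros; push_cast; ring
  -- membership
  have hmem : ∀ p : D, f p ∈ {x : ZMod N × ZMod N × ZMod N × ZMod N |
      x.1 ^ 2 + x.2.1 ^ 2 + x.2.2.1 ^ 2 + x.2.2.2 ^ 2 = (n : ZMod N)} := by
    rintro ⟨b, c, d, t₁, t₂, t₃, t₄⟩
    simp only [hfdef, Set.mem_setOf_eq]
    rw [hsum, hcast]
    obtain ⟨w, hw⟩ := hR ((b:ℕ):ℤ) ((c:ℕ):ℤ) ((d:ℕ):ℤ)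
    rw [hk] at hw
    refine ⟨w + 2*((R ((b:ℕ):ℤ) ((c:ℕ):ℤ) ((d:ℕ):ℤ))*((t₁:ℕ):ℤ)
        + (β₂+8*((b:ℕ):ℤ))*((t₂:ℕ):ℤ) + (β₃+8*((c:ℕ):ℤ))*((t₃:ℕ):ℤ)
        + (β₄+8*((d:ℕ):ℤ))*((t₄:ℕ):ℤ))
        + 8*X*(((t₁:ℕ):ℤ)^2 + ((t₂:ℕ):ℤ)^2 + ((t₃:ℕ):ℤ)^2 + ((t₄:ℕ):ℤ)^2), ?_⟩
    linear_combination (A*A)*hw - hm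
  -- injectivity
  have hbndX : ∀ u : Fin (2^e), (0:ℤ) ≤ ((u:ℕ):ℤ) ∧ ((u:ℕ):ℤ) < X := by
    intro u
    refine ⟨by positivity, ?_⟩
    rw [hXdef]
    exact_mod_cast u.isLt
  have hbndA : ∀ v : Fin (2^θ), (0:ℤ) ≤ ((v:ℕ):ℤ) ∧ ((v:ℕ):ℤ) < A := by
    intro v
    refine ⟨by positivity, ?_⟩
    rw [hAdef]
    exact_mod_cast v.isLt
  have step : ∀ (w : ℤ) (u u' : Fin (2^e)) (v v' : Fin (2^θ)),
      (8*(A*A*X)) ∣ ((A*(w + 8*((u:ℕ):ℤ)) + 8*A*X*((v:ℕ):ℤ))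
        - (A*(w + 8*((u':ℕ):ℤ)) + 8*A*X*((v':ℕ):ℤ))) → u = u' ∧ v = v' := by
    intro w u u' v v' hd
    obtain ⟨q, hq⟩ := hd
    have hq' : (((u:ℕ):ℤ) - ((u':ℕ):ℤ)) + X*(((v:ℕ):ℤ) - ((v':ℕ):ℤ)) = (A*X)*q := by
      apply mul_left_cancel₀ (show (8*A : ℤ) ≠ 0 by positivity)
      linear_combination hq
    have hXd : X ∣ (((u:ℕ):ℤ) - ((u':ℕ):ℤ)) :=
      ⟨A*q - (((v:ℕ):ℤ) - ((v':ℕ):ℤ)), by linear_combination hq'⟩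
    have hUU : ((u:ℕ):ℤ) = ((u':ℕ):ℤ) :=
      digit_eq X _ _ (hbndX u).1 (hbndX u).2 (hbndX u').1 (hbndX u').2 hXd
    have hAd : ((v:ℕ):ℤ) - ((v':ℕ):ℤ) = A*q := by
      apply mul_left_cancel₀ hX0.ne'
      linear_combination hq' - hUU
    have hVV : ((v:ℕ):ℤ) = ((v':ℕ):ℤ) :=
      digit_eq A _ _ (hbndA v).1 (hbndA v).2 (hbndA v').1 (hbndA v').2 ⟨q, hAd⟩
    exact ⟨Fin.ext (by exact_mod_cast hUU), Fin.ext (by exact_mod_cast hVV)⟩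
  have hinj : Function.Injective f := by
    rintro ⟨b, c, d, t₁, t₂, t₃, t₄⟩ ⟨b', c', d', t₁', t₂', t₃', t₄'⟩ hpq
    simp only [hfdef, Prod.mk.injEq] at hpq
    obtain ⟨h1, h2, h3, h4⟩ := hpq
    rw [hcast] at h1 h2 h3 h4
    obtain ⟨hb, ht₂⟩ := step β₂ b b' t₂ t₂' h2
    obtain ⟨hc, ht₃⟩ := step β₃ c c' t₃ t₃' h3
    obtain ⟨hd', ht₄⟩ := step β₄ d d' t₄ t₄' h4
    subst hb hc hd' ht₂ ht₃ ht₄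
    obtain ⟨q, hq⟩ := h1
    have hA1 : ((t₁:ℕ):ℤ) - ((t₁':ℕ):ℤ) = A*q := by
      apply mul_left_cancel₀ (show (8*A*X : ℤ) ≠ 0 by positivity)
      linear_combination hq
    have ht₁ : ((t₁:ℕ):ℤ) = ((t₁':ℕ):ℤ) :=
      digit_eq A _ _ (hbndA t₁).1 (hbndA t₁).2 (hbndA t₁').1 (hbndA t₁').2 ⟨q, hA1⟩
    have : t₁ = t₁' := Fin.ext (by exact_mod_cast ht₁)
    subst this
    rfl
  -- counting
  have hcard : Nat.card D = 2^(3*e) * 2^(4*θ) := by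
    rw [hDdef]
    simp only [Nat.card_eq_fintype_card, Fintype.card_prod, Fintype.card_fin]
    rw [show 3*e = e+(e+e) by ring, show 4*θ = θ+(θ+(θ+θ)) by ring]
    rw [pow_add, pow_add, pow_add, pow_add, pow_add]
    ring
  calc 2^(3*e) * 2^(4*θ) = Nat.card D := hcard.symm
    _ = Nat.card (Set.range f) := (Nat.card_range_of_injective hinj).symm
    _ = (Set.range f).ncard := Nat.card_coe_set_eq _
    _ ≤ _ := Set.ncard_le_ncard (Set.range_subset_iff.mpr hmem) (Set.toFinite _)
end

section
/- Let w₂ be the multiplicative function on positive integers defined on prime powers p^(6u+v) with 1 ≤ v ≤ 6 by: w₂(p^(6u+v)) = p^(−u−v/6) when u ≥ 1; w₂(p^v) = p^(−1) when u = 0 and 2 ≤ v ≤ 6; and w₂(p) = p^(−1/2). Then w₂(q) ≤ q^(−1/6) for every positive integer q. -/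
/-- Value of the multiplicative function `w₂` at a prime power `p ^ k`
(for `k ≥ 1`; writing `k = 6u + v` with `1 ≤ v ≤ 6`). -/
noncomputable def wtwoPrimePow (p k : ℕ) : ℝ :=
  if 7 ≤ k then
    (p : ℝ) ^ (-(((k - 1) / 6 : ℕ) : ℝ) - ((k - 6 * ((k - 1) / 6) : ℕ) : ℝ) / 6)
  else if k = 1 then (p : ℝ) ^ (-(1 : ℝ) / 2)
  else (p : ℝ) ^ (-(1 : ℝ))

/-- The multiplicative function `w₂`. -/
noncomputable def wtwo (q : ℕ) : ℝ :=
  ∏ p ∈ q.primeFactors, wtwoPrimePow p (q.factorization p)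

lemma wtwoPrimePow_nonneg (p k : ℕ) : 0 ≤ wtwoPrimePow p k := by
  unfold wtwoPrimePow
  split_ifs <;> exact Real.rpow_nonneg (by positivity) _

lemma wtwoPrimePow_le (p k : ℕ) (hp : p.Prime) (hk : 1 ≤ k) :
    wtwoPrimePow p k ≤ ((p ^ k : ℕ) : ℝ) ^ (-(1 : ℝ) / 6) := by
  have hp1 : (1 : ℝ) < p := by exact_mod_cast hp.one_lt
  have hp0 : (0 : ℝ) < p := by linarith
  have hcast : ((p ^ k : ℕ) : ℝ) ^ (-(1 : ℝ) / 6) = (p : ℝ) ^ (-(k : ℝ) / 6) := by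
    push_cast
    rw [← Real.rpow_natCast (p : ℝ) k, ← Real.rpow_mul hp0.le]
    ring_nf
  rw [hcast]
  unfold wtwoPrimePow
  split_ifs with h7 h1
  · -- k ≥ 7, equality of exponents
    apply le_of_eq
    congr 1
    have h6u : 6 * ((k - 1) / 6) ≤ k - 1 := Nat.mul_div_le _ _
    have h6u' : 6 * ((k - 1) / 6) ≤ k := h6u.trans (Nat.sub_le _ _)
    have hv : ((k - 6 * ((k - 1) / 6) : ℕ) : ℝ) = (k : ℝ) - 6 * (((k - 1) / 6 : ℕ) : ℝ) := by
      push_cast [Nat.cast_sub h6u']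
      ring
    rw [hv]; ring
  · subst h1
    apply Real.rpow_le_rpow_left_iff hp1 |>.mpr
    norm_num
  · apply Real.rpow_le_rpow_left_iff hp1 |>.mpr
    have hk6 : k ≤ 6 := by omega
    have : (k : ℝ) ≤ 6 := by exact_mod_cast hk6
    linarith

theorem wtwo_le (q : ℕ) (hq : 0 < q) : wtwo q ≤ (q : ℝ) ^ (-(1 : ℝ) / 6) := by
  have key : wtwo q ≤ ∏ p ∈ q.primeFactors, ((p ^ q.factorization p : ℕ) : ℝ) ^ (-(1 : ℝ) / 6) := by
    apply Finset.prod_le_prod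
    · intro p _; exact wtwoPrimePow_nonneg _ _
    · intro p hpmem
      have hp := Nat.prime_of_mem_primeFactors hpmem
      have hk : 1 ≤ q.factorization p := by
        have := Nat.Prime.factorization_pos_of_dvd hp hq.ne' (Nat.dvd_of_mem_primeFactors hpmem)
        omega
      exact wtwoPrimePow_le p _ hp hk
  refine key.trans (le_of_eq ?_)
  rw [Real.finset_prod_rpow _ _ (fun p _ => by positivity)]
  congr 1
  rw [← Nat.cast_prod]
  congr 1
  conv_rhs => rw [← Nat.factorization_prod_pow_eq_self hq.ne']
  rw [← Nat.prod_factorization_eq_prod_primeFactors]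
end
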